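/- arXiv:1011.3638 — 2 statements merged into one kernel-verified Lean document; each statement's English description precedes it below -/
import Mathlib

section
/- Suppose (Z, T) is independent of (W, C), β = P(T ≥ W) > 0, and τ0 ≤ t are reals with g(s) > 0 for all s ∈ [τ0, t]. Then for every real m, the weighted estimand identifies the joint distribution of marker and failure time: E[(S(X)/G(X)) · Δ · 1{Z ≤ m} · 1{τ0 ≤ X ≤ t} | T ≥ W] = P(Z ≤ m and τ0 ≤ T ≤ t). -/
/-!
Independence of `(Z, T)` from `(W, C)` factorises the at-risk probability
`P(W ≤ s ≤ T, s ≤ C) = S(s) g(s)`, so `G = S g / β`. On the observed event `{W ≤ T ≤ C}` the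
weight `S(T)/G(T)` is therefore `β / g(T)`, while integrating out `(W, C)` first replaces the
indicator of `{W ≤ T ≤ C}` by `g(T)`: the two cancel and leave `β P(Z ≤ m, τ0 ≤ T ≤ t)`,
and conditioning on `{T ≥ W}` divides by `β`. The only exception is the event `S(T) = 0`,
where the weight is `0 / 0 = 0`; it is null.
-/

open MeasureTheory ProbabilityTheory
open scoped ENNReal

lemma measure_setOf_measure_Ici_eq_zero (ν : Measure ℝ) :
    ν {s | ν (Set.Ici s) = 0} = 0 := by
  set U := {s | ν (Set.Ici s) = 0}
  have hU : IsUpperSet U := fun a b hab ha => measure_mono_null (Set.Ici_subset_Ici.2 hab) ha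
  -- an element of `U` with no rational of `U` below it is the least element of `U`
  have hcover : U ⊆ (⋃ q ∈ {q : ℚ | (q : ℝ) ∈ U}, Set.Ici (q : ℝ)) ∪ {s | IsLeast U s} := by
    intro s hs
    by_cases hq : ∃ q : ℚ, (q : ℝ) ∈ U ∧ (q : ℝ) ≤ s
    · obtain ⟨q, hqU, hqs⟩ := hq
      exact Or.inl (Set.mem_biUnion hqU hqs)
    · refine Or.inr ⟨hs, fun u hu => le_of_not_gt fun hus => ?_⟩
      obtain ⟨q, huq, hqs⟩ := exists_rat_btwn hus
      exact hq ⟨q, hU huq.le hu, hqs.le⟩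
  refine measure_mono_null hcover (measure_union_null ?_ ?_)
  · exact measure_biUnion_null_iff (Set.to_countable _) |>.2 fun q hq => hq
  · rcases Set.eq_empty_or_nonempty {s | IsLeast U s} with h | ⟨s, hs⟩
    · rw [h, measure_empty]
    · exact measure_mono_null (fun u hu => (hu.unique hs).ge) hs.1

lemma ae_measure_le_ne_zero {Ω : Type*} [MeasurableSpace Ω] (μ : Measure Ω) {T : Ω → ℝ}
    (hT : Measurable T) : ∀ᵐ ω ∂μ, μ {ω' | T ω ≤ T ω'} ≠ 0 := by
  rw [ae_iff]
  refine measure_mono_null (fun ω hω => ?_) <| nonpos_iff_eq_zero.1 <|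
    (Measure.le_map_apply hT.aemeasurable _).trans_eq (measure_setOf_measure_Ici_eq_zero (μ.map T))
  show μ.map T (Set.Ici (T ω)) = 0
  rw [Measure.map_apply hT measurableSet_Ici]
  exact not_not.1 hω

theorem ProbabilityTheory.IndepFun.lintegral_comp_prodMk {Ω α β : Type*} [MeasurableSpace Ω]
    [MeasurableSpace α] [MeasurableSpace β] {μ : Measure Ω} [IsFiniteMeasure μ]
    {X : Ω → α} {Y : Ω → β} (hXY : IndepFun X Y μ) (hX : Measurable X) (hY : Measurable Y)
    {F : α × β → ℝ≥0∞} (hF : Measurable F) :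
    ∫⁻ ω, F (X ω, Y ω) ∂μ = ∫⁻ ω, ∫⁻ ω', F (X ω, Y ω') ∂μ ∂μ := by
  rw [← lintegral_map hF (hX.prodMk hY),
    (indepFun_iff_map_prod_eq_prod_map_map hX.aemeasurable hY.aemeasurable).1 hXY,
    lintegral_prod _ hF.aemeasurable, lintegral_map hF.lintegral_prod_right' hX]
  exact lintegral_congr fun ω => lintegral_map (hF.comp measurable_prodMk_left) hY

lemma measurable_toReal_measure_setOf {α Ω : Type*} [MeasurableSpace α] [MeasurableSpace Ω]
    (μ : Measure Ω) [SFinite μ] {P : α → Ω → Prop}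
    (hP : MeasurableSet {p : α × Ω | P p.1 p.2}) :
    Measurable fun a => (μ {ω | P a ω}).toReal :=
  (measurable_measure_prodMk_left hP).ennreal_toReal

lemma setLIntegral_uncensored_eq_lintegral_mul {Ω E : Type*} [MeasurableSpace Ω] [MeasurableSpace E]
    {μ : Measure Ω} [IsFiniteMeasure μ] {Z : Ω → E} {T C W : Ω → ℝ}
    (hZ : Measurable Z) (hT : Measurable T) (hC : Measurable C) (hW : Measurable W)
    (hindep : IndepFun (fun ω => (Z ω, T ω)) (fun ω => (W ω, C ω)) μ)
    {ψ : E × ℝ → ℝ≥0∞} (hψ : Measurable ψ) :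
    ∫⁻ ω in {ω | W ω ≤ T ω ∧ T ω ≤ C ω}, ψ (Z ω, T ω) ∂μ
      = ∫⁻ ω, μ {ω' | W ω' ≤ T ω ∧ T ω ≤ C ω'} * ψ (Z ω, T ω) ∂μ := by
  have hB : MeasurableSet {p : (E × ℝ) × ℝ × ℝ | p.2.1 ≤ p.1.2 ∧ p.1.2 ≤ p.2.2} :=
    (measurableSet_le measurable_snd.fst measurable_fst.snd).inter
      (measurableSet_le measurable_fst.snd measurable_snd.snd)
  have hmeas : ∀ s, MeasurableSet {ω | W ω ≤ s ∧ s ≤ C ω} := fun s =>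
    (measurableSet_le hW measurable_const).inter (measurableSet_le measurable_const hC)
  have hrisk : MeasurableSet {ω | W ω ≤ T ω ∧ T ω ≤ C ω} :=
    (measurableSet_le hW hT).inter (measurableSet_le hT hC)
  calc ∫⁻ ω in {ω | W ω ≤ T ω ∧ T ω ≤ C ω}, ψ (Z ω, T ω) ∂μ
      = ∫⁻ ω, Set.indicator {p : (E × ℝ) × ℝ × ℝ | p.2.1 ≤ p.1.2 ∧ p.1.2 ≤ p.2.2}
          (ψ ∘ Prod.fst) ((Z ω, T ω), (W ω, C ω)) ∂μ := by
        rw [← lintegral_indicator hrisk]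
        rfl
    _ = ∫⁻ ω, μ {ω' | W ω' ≤ T ω ∧ T ω ≤ C ω'} * ψ (Z ω, T ω) ∂μ := by
      rw [hindep.lintegral_comp_prodMk (hZ.prodMk hT) (hW.prodMk hC)
        ((hψ.comp measurable_fst).indicator hB)]
      refine lintegral_congr fun ω => ?_
      rw [mul_comm, ← lintegral_indicator_const (hmeas (T ω))]
      rfl

lemma cond_measure_atRisk_eq {Ω : Type*} [MeasurableSpace Ω] {μ : Measure Ω} {T C W : Ω → ℝ}
    (hT : Measurable T) (hW : Measurable W) (hindep : IndepFun T (fun ω => (W ω, C ω)) μ)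
    (s : ℝ) :
    μ[|{ω | W ω ≤ T ω}] {ω | s ≤ min (T ω) (C ω) ∧ W ω ≤ s}
      = (μ {ω | W ω ≤ T ω})⁻¹ * (μ {ω | s ≤ T ω} * μ {ω | W ω ≤ s ∧ s ≤ C ω}) := by
  have hrisk : {ω | W ω ≤ T ω} ∩ {ω | s ≤ min (T ω) (C ω) ∧ W ω ≤ s}
      = T ⁻¹' Set.Ici s ∩ (fun ω => (W ω, C ω)) ⁻¹' {q | q.1 ≤ s ∧ s ≤ q.2} := by
    ext ω
    simp only [Set.mem_inter_iff, Set.mem_ofPred_eq, Set.mem_preimage, Set.mem_Ici, le_min_iff]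
    constructor
    · rintro ⟨-, ⟨hsT, hsC⟩, hWs⟩
      exact ⟨hsT, hWs, hsC⟩
    · rintro ⟨hsT, hWs, hsC⟩
      exact ⟨hWs.trans hsT, ⟨hsT, hsC⟩, hWs⟩
  rw [cond_apply (measurableSet_le hW hT), hrisk, hindep.measure_inter_preimage_eq_mul _
    {q : ℝ × ℝ | q.1 ≤ s ∧ s ≤ q.2} measurableSet_Ici
    ((measurableSet_le measurable_fst measurable_const).inter
      (measurableSet_le measurable_const measurable_snd))]
  rfl

noncomputable def ipwWeight (S G : ℝ → ℝ) (τ0 t m : ℝ) (p : ℝ × ℝ) : ℝ :=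
  if p.1 ≤ m ∧ τ0 ≤ p.2 ∧ p.2 ≤ t then S p.2 / G p.2 else 0

lemma measurable_ipwWeight {S G : ℝ → ℝ} {τ0 t m : ℝ} (hS : Measurable S) (hG : Measurable G) :
    Measurable (ipwWeight S G τ0 t m) :=
  Measurable.ite ((measurableSet_le measurable_fst measurable_const).inter
    ((measurableSet_le measurable_const measurable_snd).inter
      (measurableSet_le measurable_snd measurable_const)))
    ((hS.comp measurable_snd).div (hG.comp measurable_snd)) measurable_const

lemma indicator_ipw_integrand_eq {Ω : Type*} {T C W Z : Ω → ℝ} {S G : ℝ → ℝ} {τ0 t m : ℝ}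
    (ω : Ω) :
    {ω | W ω ≤ T ω}.indicator (fun ω => ENNReal.ofReal ((S (min (T ω) (C ω))
        / G (min (T ω) (C ω))) * Set.indicator {ω' | T ω' ≤ C ω'} (fun _ => (1 : ℝ)) ω
        * Set.indicator {ω' | Z ω' ≤ m} (fun _ => (1 : ℝ)) ω
        * Set.indicator {ω' | τ0 ≤ min (T ω') (C ω') ∧ min (T ω') (C ω') ≤ t}
            (fun _ => (1 : ℝ)) ω)) ω
      = {ω | W ω ≤ T ω ∧ T ω ≤ C ω}.indicator
          (fun ω => ENNReal.ofReal (ipwWeight S G τ0 t m (Z ω, T ω))) ω := by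
  by_cases hWT : W ω ≤ T ω
  · by_cases hTC : T ω ≤ C ω
    · simp only [ipwWeight, Set.indicator_apply, Set.mem_ofPred_eq, hWT, hTC, min_eq_left hTC]
      split_ifs <;> simp_all
    · simp [Set.indicator_apply, hWT, hTC]
  · simp [Set.indicator_apply, hWT]

section IPW

variable {Ω : Type*} [MeasurableSpace Ω] {μ : Measure Ω} {T C W Z : Ω → ℝ} {S g G : ℝ → ℝ}
  {τ0 t m : ℝ}

lemma atRisk_eq_survival_mul_div (hT : Measurable T) (hW : Measurable W)
    (hindep : IndepFun T (fun ω => (W ω, C ω)) μ)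
    (hS : ∀ s, S s = (μ {ω | s ≤ T ω}).toReal)
    (hg : ∀ s, g s = (μ {ω | W ω ≤ s ∧ s ≤ C ω}).toReal)
    (hG : ∀ s, G s = ((μ[|{ω | W ω ≤ T ω}]) {ω | s ≤ min (T ω) (C ω) ∧ W ω ≤ s}).toReal)
    (s : ℝ) :
    G s = S s * g s / (μ {ω | W ω ≤ T ω}).toReal := by
  rw [hG, cond_measure_atRisk_eq hT hW hindep, hS, hg, ENNReal.toReal_mul, ENNReal.toReal_mul,
    ENNReal.toReal_inv]
  ring

lemma ae_mul_ipwWeight_eq [IsFiniteMeasure μ] (hT : Measurable T)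
    (hS : ∀ s, S s = (μ {ω | s ≤ T ω}).toReal)
    (hg : ∀ s, g s = (μ {ω | W ω ≤ s ∧ s ≤ C ω}).toReal)
    (hGS : ∀ s, G s = S s * g s / (μ {ω | W ω ≤ T ω}).toReal)
    (hA : μ {ω | W ω ≤ T ω} ≠ 0) (hgpos : ∀ s ∈ Set.Icc τ0 t, 0 < g s) :
    ∀ᵐ ω ∂μ, μ {ω' | W ω' ≤ T ω ∧ T ω ≤ C ω'} * ENNReal.ofReal (ipwWeight S G τ0 t m (Z ω, T ω))
      = μ {ω | W ω ≤ T ω} * {ω | Z ω ≤ m ∧ τ0 ≤ T ω ∧ T ω ≤ t}.indicator 1 ω := by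
  filter_upwards [ae_measure_le_ne_zero μ hT] with ω hSω
  by_cases hB : Z ω ≤ m ∧ τ0 ≤ T ω ∧ T ω ≤ t
  · have hS0 : S (T ω) ≠ 0 := by
      rw [hS]
      exact ENNReal.toReal_ne_zero.2 ⟨hSω, measure_ne_top _ _⟩
    have hg0 := hgpos (T ω) ⟨hB.2.1, hB.2.2⟩
    have hA' : (μ {ω | W ω ≤ T ω}).toReal ≠ 0 := ENNReal.toReal_ne_zero.2 ⟨hA, measure_ne_top _ _⟩
    rw [Set.indicator_of_mem (s := {ω | Z ω ≤ m ∧ τ0 ≤ T ω ∧ T ω ≤ t}) hB, Pi.one_apply, mul_one,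
      ← ENNReal.ofReal_toReal (measure_ne_top μ {ω' | W ω' ≤ T ω ∧ T ω ≤ C ω'}), ← hg,
      ← ENNReal.ofReal_mul hg0.le, ← ENNReal.ofReal_toReal (measure_ne_top μ {ω | W ω ≤ T ω})]
    simp only [ipwWeight, if_pos hB, hGS]
    congr 1
    field_simp
  · simp [ipwWeight, hB]

lemma lintegral_cond_ipw_integrand_eq [IsFiniteMeasure μ] (hZ : Measurable Z)
    (hT : Measurable T) (hC : Measurable C) (hW : Measurable W)
    (hindep : IndepFun (fun ω => (Z ω, T ω)) (fun ω => (W ω, C ω)) μ)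
    (hS : ∀ s, S s = (μ {ω | s ≤ T ω}).toReal)
    (hg : ∀ s, g s = (μ {ω | W ω ≤ s ∧ s ≤ C ω}).toReal)
    (hGS : ∀ s, G s = S s * g s / (μ {ω | W ω ≤ T ω}).toReal)
    (hSm : Measurable S) (hGm : Measurable G)
    (hA : μ {ω | W ω ≤ T ω} ≠ 0) (hgpos : ∀ s ∈ Set.Icc τ0 t, 0 < g s) :
    ∫⁻ ω, ENNReal.ofReal ((S (min (T ω) (C ω)) / G (min (T ω) (C ω)))
        * Set.indicator {ω' | T ω' ≤ C ω'} (fun _ => (1 : ℝ)) ω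
        * Set.indicator {ω' | Z ω' ≤ m} (fun _ => (1 : ℝ)) ω
        * Set.indicator {ω' | τ0 ≤ min (T ω') (C ω') ∧ min (T ω') (C ω') ≤ t}
            (fun _ => (1 : ℝ)) ω) ∂(μ[|{ω | W ω ≤ T ω}])
      = μ {ω | Z ω ≤ m ∧ τ0 ≤ T ω ∧ T ω ≤ t} := by
  have hR : MeasurableSet {ω | W ω ≤ T ω ∧ T ω ≤ C ω} :=
    (measurableSet_le hW hT).inter (measurableSet_le hT hC)
  have hB : MeasurableSet {ω | Z ω ≤ m ∧ τ0 ≤ T ω ∧ T ω ≤ t} :=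
    (measurableSet_le hZ measurable_const).inter
      ((measurableSet_le measurable_const hT).inter (measurableSet_le hT measurable_const))
  rw [ProbabilityTheory.cond, lintegral_smul_measure, smul_eq_mul,
    ← lintegral_indicator (measurableSet_le hW hT), lintegral_congr indicator_ipw_integrand_eq,
    lintegral_indicator hR,
    setLIntegral_uncensored_eq_lintegral_mul hZ hT hC hW hindep
      (measurable_ipwWeight hSm hGm).ennreal_ofReal,
    lintegral_congr_ae (ae_mul_ipwWeight_eq hT hS hg hGS hA hgpos),
    lintegral_const_mul' _ _ (measure_ne_top _ _), lintegral_indicator_one hB,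
    ENNReal.inv_mul_cancel_left hA (measure_ne_top _ _)]

end IPW

theorem ipw_joint_distribution_identification_general
    {Ω : Type*} [MeasurableSpace Ω] (μ : Measure Ω) [IsProbabilityMeasure μ]
    (T C W Z : Ω → ℝ) (hT : Measurable T) (hC : Measurable C) (hW : Measurable W)
    (hZmeas : Measurable Z)
    (hindep : IndepFun (fun ω => (Z ω, T ω)) (fun ω => (W ω, C ω)) μ)
    (S g G : ℝ → ℝ)
    (hS : ∀ t, S t = (μ {ω | t ≤ T ω}).toReal)
    (hg : ∀ t, g t = (μ {ω | W ω ≤ t ∧ t ≤ C ω}).toReal)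
    (hβ : 0 < (μ {ω | W ω ≤ T ω}).toReal)
    (hG : ∀ t, G t = ((μ[|{ω | W ω ≤ T ω}]) {ω | t ≤ min (T ω) (C ω) ∧ W ω ≤ t}).toReal)
    (τ0 t : ℝ) (hgpos : ∀ s ∈ Set.Icc τ0 t, 0 < g s) (m : ℝ) :
    ∫ ω, (S (min (T ω) (C ω)) / G (min (T ω) (C ω)))
        * Set.indicator {ω' | T ω' ≤ C ω'} (fun _ => (1 : ℝ)) ω
        * Set.indicator {ω' | Z ω' ≤ m} (fun _ => (1 : ℝ)) ω
        * Set.indicator {ω' | τ0 ≤ min (T ω') (C ω') ∧ min (T ω') (C ω') ≤ t}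
            (fun _ => (1 : ℝ)) ω ∂(μ[|{ω | W ω ≤ T ω}])
      = (μ {ω | Z ω ≤ m ∧ τ0 ≤ T ω ∧ T ω ≤ t}).toReal := by
  have hA0 : μ {ω | W ω ≤ T ω} ≠ 0 := fun h => by simp [h] at hβ
  have hSm : Measurable S := funext hS ▸ measurable_toReal_measure_setOf μ
    (measurableSet_le measurable_fst (hT.comp measurable_snd))
  have hGm : Measurable G := funext hG ▸ measurable_toReal_measure_setOf _
    ((measurableSet_le measurable_fst ((hT.min hC).comp measurable_snd)).inter
      (measurableSet_le (hW.comp measurable_snd) measurable_fst))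
  have hX : Measurable fun ω => min (T ω) (C ω) := hT.min hC
  refine (integral_eq_lintegral_of_nonneg_ae (Filter.Eventually.of_forall fun ω => ?_)
    (Measurable.aestronglyMeasurable ?_)).trans (congrArg ENNReal.toReal
      (lintegral_cond_ipw_integrand_eq hZmeas hT hC hW hindep hS hg
        (atRisk_eq_survival_mul_div hT hW (hindep.comp measurable_snd measurable_id) hS hg hG)
        hSm hGm hA0 hgpos))
  · have hSG : 0 ≤ S (min (T ω) (C ω)) / G (min (T ω) (C ω)) := by
      rw [hS, hG]
      positivity
    refine mul_nonneg (mul_nonneg (mul_nonneg hSG ?_) ?_) ?_ <;>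
      exact Set.indicator_nonneg (fun _ _ => zero_le_one) _
  · exact ((((hSm.comp hX).div (hGm.comp hX)).mul
      (measurable_const.indicator (measurableSet_le hT hC))).mul
      (measurable_const.indicator (measurableSet_le hZmeas measurable_const))).mul
      (measurable_const.indicator
        ((measurableSet_le measurable_const hX).inter (measurableSet_le hX measurable_const)))

/-- Under independence of `(Z, T)` from `(W, C)`, `β = P(T ≥ W) > 0` and
positivity of `g` on `[τ0, t]`, the weighted estimand identifies the joint distribution
of the marker and the failure time:
`E[(S(X)/G(X)) Δ 1{Z ≤ m} 1{τ0 ≤ X ≤ t} | T ≥ W] = P(Z ≤ m, τ0 ≤ T ≤ t)`. -/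
theorem ipw_joint_distribution_identification
    {Ω : Type*} [MeasurableSpace Ω] (μ : Measure Ω) [IsProbabilityMeasure μ]
    (T C W Z : Ω → ℝ) (hT : Measurable T) (hC : Measurable C) (hW : Measurable W)
    (hZmeas : Measurable Z)
    (hindep : IndepFun (fun ω => (Z ω, T ω)) (fun ω => (W ω, C ω)) μ)
    (S g G : ℝ → ℝ)
    (hS : ∀ t, S t = (μ {ω | t ≤ T ω}).toReal)
    (hg : ∀ t, g t = (μ {ω | W ω ≤ t ∧ t ≤ C ω}).toReal)
    (hβ : 0 < (μ {ω | W ω ≤ T ω}).toReal)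
    (hG : ∀ t, G t = ((μ[|{ω | W ω ≤ T ω}]) {ω | t ≤ min (T ω) (C ω) ∧ W ω ≤ t}).toReal)
    (τ0 t : ℝ) (hτ0t : τ0 ≤ t) (hgpos : ∀ s ∈ Set.Icc τ0 t, 0 < g s) (m : ℝ) :
    ∫ ω, (S (min (T ω) (C ω)) / G (min (T ω) (C ω)))
        * Set.indicator {ω' | T ω' ≤ C ω'} (fun _ => (1 : ℝ)) ω
        * Set.indicator {ω' | Z ω' ≤ m} (fun _ => (1 : ℝ)) ω
        * Set.indicator {ω' | τ0 ≤ min (T ω') (C ω') ∧ min (T ω') (C ω') ≤ t}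
            (fun _ => (1 : ℝ)) ω ∂(μ[|{ω | W ω ≤ T ω}])
      = (μ {ω | Z ω ≤ m ∧ τ0 ≤ T ω ∧ T ω ≤ t}).toReal :=
  ipw_joint_distribution_identification_general μ T C W Z hT hC hW hZmeas hindep S g G hS hg hβ hG
    τ0 t hgpos m
end

section
/- Suppose (Z, T) is independent of (W, C), β = P(T ≥ W) > 0, t1 < t2 are reals with g(s) > 0 for all s ∈ [t1, t2), P(t1 ≤ T < t2) > 0, and 0 < q < 1. If m0 is a q-th conditional quantile of the marker, i.e. P(Z ≤ m0 | t1 ≤ T < t2) = q, then the population percentile estimating function vanishes at m0: E[(S(X)/G(X)) · Δ · 1{t1 ≤ X < t2} · (1{Z ≤ m0} − q) | T ≥ W] = 0. -/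
/-!
On `{W ≤ T ≤ C}` the inverse weight `S(X) / G(X)` equals `β / g(T)`: independence gives
`G(t) = S(t) g(t) / β`, and `S(T) > 0` almost surely. Freezing `(Z, T)` and integrating out the
independent pair `(W, C)` replaces `1{W ≤ T ≤ C}` by `g(T)`, which cancels the weight, so the
integral over `{W ≤ T}` becomes `β E[1{t1 ≤ T < t2} (1{Z ≤ m0} - q)]`, zero by the choice of `m0`.
-/

open MeasureTheory ProbabilityTheory

section

variable {Ω : Type*} [MeasurableSpace Ω]

theorem ae_measure_setOf_le_ne_zero {α : Type*} [LinearOrder α] [TopologicalSpace α]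
    [OrderClosedTopology α] [SecondCountableTopology α] [MeasurableSpace α]
    [OpensMeasurableSpace α] (μ : Measure Ω) [SFinite μ] {T : Ω → α} (hT : Measurable T) :
    ∀ᵐ ω ∂μ, μ {ω' | T ω ≤ T ω'} ≠ 0 := by
  set N := {ω | μ {ω' | T ω ≤ T ω'} = 0}
  have hle : MeasurableSet {p : Ω × Ω | T p.1 ≤ T p.2} :=
    measurableSet_le (hT.comp measurable_fst) (hT.comp measurable_snd)
  have hge : MeasurableSet {p : Ω × Ω | T p.2 ≤ T p.1} :=
    measurableSet_le (hT.comp measurable_snd) (hT.comp measurable_fst)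
  have hN : MeasurableSet N := measurable_measure_prodMk_left hle (measurableSet_singleton 0)
  -- `μ N ^ 2 = (μ ⊗ μ) (N ×ˢ N)`, and `N ×ˢ N` is covered by two sets all of whose sections
  -- through points of `N` are null.
  have hleft : μ.prod μ (N ×ˢ Set.univ ∩ {p | T p.1 ≤ T p.2}) = 0 := by
    rw [Measure.prod_apply ((hN.prod .univ).inter hle)]
    refine (lintegral_congr fun ω => ?_).trans lintegral_zero
    by_cases hω : ω ∈ N
    · exact measure_mono_null (fun ω' h => h.2) hω
    · exact measure_mono_null (fun ω' h => absurd h.1.1 hω) measure_empty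
  have hright : μ.prod μ (Set.univ ×ˢ N ∩ {p | T p.2 ≤ T p.1}) = 0 := by
    rw [Measure.prod_apply_symm ((MeasurableSet.univ.prod hN).inter hge)]
    refine (lintegral_congr fun ω => ?_).trans lintegral_zero
    by_cases hω : ω ∈ N
    · exact measure_mono_null (fun ω' h => h.2) hω
    · exact measure_mono_null (fun ω' h => absurd h.1.2 hω) measure_empty
  have hNN : μ N * μ N = 0 := by
    rw [← Measure.prod_prod]
    refine measure_mono_null (fun p hp => ?_) (measure_union_null hleft hright)
    rcases le_total (T p.1) (T p.2) with h | h
    · exact Or.inl ⟨⟨hp.1, trivial⟩, h⟩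
    · exact Or.inr ⟨⟨trivial, hp.2⟩, h⟩
  rw [ae_iff]
  simpa using hNN

theorem ProbabilityTheory.IndepFun.integral_mul_indicator_eq {α β : Type*} [MeasurableSpace α]
    [MeasurableSpace β] {μ : Measure Ω} [IsFiniteMeasure μ] {X : Ω → α} {Y : Ω → β}
    (hXY : IndepFun X Y μ) (hX : Measurable X) (hY : Measurable Y) {f : α → ℝ}
    (hf : Measurable f) {s : Set (α × β)} (hs : MeasurableSet s)
    (hint : Integrable (fun ω => f (X ω) * μ.real (Y ⁻¹' {y | (X ω, y) ∈ s})) μ) :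
    ∫ ω, f (X ω) * s.indicator 1 (X ω, Y ω) ∂μ
      = ∫ ω, f (X ω) * μ.real (Y ⁻¹' {y | (X ω, y) ∈ s}) ∂μ := by
  set ν := μ.map Y
  have hsection : ∀ c x, ∫ y, c * s.indicator 1 (x, y) ∂ν = c * ν.real (Prod.mk x ⁻¹' s) := by
    intro c x
    rw [integral_const_mul, ← integral_indicator_one (measurable_prodMk_left hs)]
    rfl
  have hsection_meas : Measurable fun x => f x * ν.real (Prod.mk x ⁻¹' s) :=
    hf.mul (measurable_measure_prodMk_left hs).ennreal_toReal
  have hmap_real : ∀ x, ν.real (Prod.mk x ⁻¹' s) = μ.real (Y ⁻¹' {y | (x, y) ∈ s}) :=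
    fun x => map_measureReal_apply hY (measurable_prodMk_left hs)
  have hprod_meas : Measurable fun p : α × β => f p.1 * s.indicator 1 p :=
    (hf.comp measurable_fst).mul (measurable_one.indicator hs)
  have hint_map : Integrable (fun x => f x * ν.real (Prod.mk x ⁻¹' s)) (μ.map X) := by
    rw [integrable_map_measure hsection_meas.aestronglyMeasurable hX.aemeasurable]
    simpa only [Function.comp_def, hmap_real] using hint
  have hint_prod : Integrable (fun p : α × β => f p.1 * s.indicator 1 p) ((μ.map X).prod ν) := by
    refine (integrable_prod_iff hprod_meas.aestronglyMeasurable).2 ⟨.of_forall fun x => ?_, ?_⟩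
    · exact ((integrable_const 1).indicator (measurable_prodMk_left hs)).const_mul (f x)
    · refine hint_map.norm.congr (.of_forall fun x => ?_)
      have hnorm : ∀ y, ‖f x * s.indicator 1 (x, y)‖ = ‖f x‖ * s.indicator 1 (x, y) := by
        intro y
        by_cases hy : (x, y) ∈ s <;> simp [hy]
      simp only [hnorm, hsection, norm_mul, Real.norm_of_nonneg measureReal_nonneg]
  calc ∫ ω, f (X ω) * s.indicator 1 (X ω, Y ω) ∂μ
      = ∫ p, f p.1 * s.indicator 1 p ∂((μ.map X).prod ν) := by
        rw [← (indepFun_iff_map_prod_eq_prod_map_map hX.aemeasurable hY.aemeasurable).1 hXY,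
          integral_map (hX.prodMk hY).aemeasurable hprod_meas.aestronglyMeasurable]
    _ = ∫ x, f x * ν.real (Prod.mk x ⁻¹' s) ∂(μ.map X) := by
        rw [integral_prod _ hint_prod]
        exact integral_congr_ae (.of_forall fun x => hsection (f x) x)
    _ = _ := by
        rw [integral_map hX.aemeasurable hsection_meas.aestronglyMeasurable]
        simp only [hmap_real]

theorem integral_indicator_mul_sub_cond_eq_zero (μ : Measure Ω) [IsFiniteMeasure μ]
    {B E : Set Ω} (hB : MeasurableSet B) (hE : MeasurableSet E) :
    ∫ ω, B.indicator (fun _ => (1 : ℝ)) ω * (E.indicator (fun _ => 1) ω - (μ[|B]).real E) ∂μ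
      = 0 := by
  have hcond : (μ[|B]).real E * μ.real B = μ.real (B ∩ E) := by
    simp only [measureReal_def, ← ENNReal.toReal_mul, cond_mul_eq_inter hB]
  have hmul : ∀ ω, B.indicator (fun _ => (1 : ℝ)) ω * (E.indicator (fun _ => 1) ω - (μ[|B]).real E)
      = B.indicator (fun ω => E.indicator (fun _ => 1) ω - (μ[|B]).real E) ω := fun ω => by
    by_cases hω : ω ∈ B <;> simp [hω]
  rw [integral_congr_ae (.of_forall hmul), integral_indicator hB,
    integral_sub ((integrable_const (μ := μ.restrict B) (1 : ℝ)).indicator hE)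
      (integrable_const _),
    integral_indicator_const (1 : ℝ) hE, setIntegral_const, measureReal_restrict_apply hE,
    smul_eq_mul, smul_eq_mul, mul_one, mul_comm, hcond, Set.inter_comm, sub_self]

variable {μ : Measure Ω} {T C W Z : Ω → ℝ}

theorem cond_real_atRisk_eq_of_indepFun (hT : Measurable T) (hW : Measurable W)
    (hindep : IndepFun T (fun ω => (W ω, C ω)) μ) (t : ℝ) :
    (μ[|{ω | W ω ≤ T ω}]).real {ω | t ≤ min (T ω) (C ω) ∧ W ω ≤ t}
      = μ.real {ω | t ≤ T ω} * μ.real {ω | W ω ≤ t ∧ t ≤ C ω} / μ.real {ω | W ω ≤ T ω} := by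
  have hinter : {ω | W ω ≤ T ω} ∩ {ω | t ≤ min (T ω) (C ω) ∧ W ω ≤ t}
      = T ⁻¹' Set.Ici t ∩ (fun ω => (W ω, C ω)) ⁻¹' {y | y.1 ≤ t ∧ t ≤ y.2} := by
    ext ω
    simp only [Set.mem_inter_iff, Set.mem_ofPred_eq, Set.mem_preimage, Set.mem_Ici, le_min_iff]
    constructor
    · rintro ⟨-, ⟨htT, htC⟩, hWt⟩
      exact ⟨htT, hWt, htC⟩
    · rintro ⟨htT, hWt, htC⟩
      exact ⟨hWt.trans htT, ⟨htT, htC⟩, hWt⟩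
  have hprod := hindep.measure_inter_preimage_eq_mul (Set.Ici t) {y : ℝ × ℝ | y.1 ≤ t ∧ t ≤ y.2}
    measurableSet_Ici
    ((measurableSet_le measurable_fst measurable_const).inter
      (measurableSet_le measurable_const measurable_snd))
  rw [measureReal_def, cond_apply (measurableSet_le hW hT), hinter, hprod, ENNReal.toReal_mul,
    ENNReal.toReal_mul, ENNReal.toReal_inv, inv_mul_eq_div]
  rfl

theorem measurable_measureReal_atRisk (μ : Measure Ω) [SFinite μ] (hC : Measurable C)
    (hW : Measurable W) : Measurable fun t => μ.real {ω | W ω ≤ t ∧ t ≤ C ω} :=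
  (measurable_measure_prodMk_left (ν := μ)
    ((measurableSet_le (hW.comp measurable_snd) measurable_fst).inter
      (measurableSet_le measurable_fst (hC.comp measurable_snd)))).ennreal_toReal

theorem indicator_ipw_integrand_ae_eq [IsFiniteMeasure μ] (hT : Measurable T) {S G w : ℝ → ℝ}
    (hS : ∀ t, S t = μ.real {ω | t ≤ T ω}) (hSG : ∀ t, S t ≠ 0 → S t / G t = w t) (f : ℝ → ℝ)
    (Y : Ω → ℝ) :
    {ω | W ω ≤ T ω}.indicator (fun ω => S (min (T ω) (C ω)) / G (min (T ω) (C ω))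
        * {ω' | T ω' ≤ C ω'}.indicator (fun _ => 1) ω * f (min (T ω) (C ω)) * Y ω)
      =ᵐ[μ] fun ω => w (T ω) * f (T ω) * Y ω
        * {ω | W ω ≤ T ω ∧ T ω ≤ C ω}.indicator (fun _ => 1) ω := by
  filter_upwards [ae_measure_setOf_le_ne_zero μ hT] with ω hω
  by_cases hWTC : W ω ≤ T ω ∧ T ω ≤ C ω
  · have hSω : S (T ω) ≠ 0 := by
      rw [hS]
      exact ENNReal.toReal_ne_zero.2 ⟨hω, measure_ne_top _ _⟩
    rw [Set.indicator_of_mem (show ω ∈ {ω | W ω ≤ T ω} from hWTC.1),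
      Set.indicator_of_mem (show ω ∈ {ω' | T ω' ≤ C ω'} from hWTC.2),
      Set.indicator_of_mem (show ω ∈ {ω | W ω ≤ T ω ∧ T ω ≤ C ω} from hWTC),
      min_eq_left hWTC.2, hSG _ hSω, mul_one, mul_one]
  · rw [Set.indicator_of_notMem (show ω ∉ {ω | W ω ≤ T ω ∧ T ω ≤ C ω} from hWTC), mul_zero]
    by_cases hWT : W ω ≤ T ω
    · have hTC : ω ∉ {ω' | T ω' ≤ C ω'} := fun hTC => hWTC ⟨hWT, hTC⟩
      rw [Set.indicator_of_mem (show ω ∈ {ω | W ω ≤ T ω} from hWT), Set.indicator_of_notMem hTC,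
        mul_zero, zero_mul, zero_mul]
    · exact Set.indicator_of_notMem (show ω ∉ {ω | W ω ≤ T ω} from hWT) _

theorem integral_indicator_ipw_eq [IsFiniteMeasure μ] (hT : Measurable T) (hC : Measurable C)
    (hW : Measurable W) (hZ : Measurable Z)
    (hindep : IndepFun (fun ω => (Z ω, T ω)) (fun ω => (W ω, C ω)) μ) {S g G : ℝ → ℝ}
    (hS : ∀ t, S t = μ.real {ω | t ≤ T ω}) (hg : ∀ t, g t = μ.real {ω | W ω ≤ t ∧ t ≤ C ω})
    (hG : ∀ t, G t = (μ[|{ω | W ω ≤ T ω}]).real {ω | t ≤ min (T ω) (C ω) ∧ W ω ≤ t})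
    {f y : ℝ → ℝ} (hf : Measurable f) (hy : Measurable y) (hfg : ∀ t, f t ≠ 0 → g t ≠ 0)
    (hint : Integrable (fun ω => f (T ω) * y (Z ω)) μ) :
    ∫ ω, {ω | W ω ≤ T ω}.indicator (fun ω => S (min (T ω) (C ω)) / G (min (T ω) (C ω))
        * {ω' | T ω' ≤ C ω'}.indicator (fun _ => 1) ω * f (min (T ω) (C ω)) * y (Z ω)) ω ∂μ
      = μ.real {ω | W ω ≤ T ω} * ∫ ω, f (T ω) * y (Z ω) ∂μ := by
  set β := μ.real {ω | W ω ≤ T ω}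
  have hSG : ∀ t, S t ≠ 0 → S t / G t = β / g t := fun t hSt => by
    rw [hG, cond_real_atRisk_eq_of_indepFun hT hW (hindep.comp measurable_snd measurable_id),
      ← hS, ← hg, div_div_eq_mul_div, mul_div_mul_left _ _ hSt]
  have hg_meas : Measurable g := by
    rw [funext hg]
    exact measurable_measureReal_atRisk μ hC hW
  set ψ : ℝ × ℝ → ℝ := fun x => β / g x.2 * f x.2 * y x.1
  have hψ : Measurable ψ :=
    (((measurable_const.div hg_meas).mul hf).comp measurable_snd).mul (hy.comp measurable_fst)
  have hψg : ∀ x : ℝ × ℝ, ψ x * g x.2 = β * (f x.2 * y x.1) := fun x => by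
    by_cases hfx : f x.2 = 0
    · simp [ψ, hfx]
    · change β / g x.2 * f x.2 * y x.1 * g x.2 = _
      field_simp [hfg _ hfx]
  set D : Set ((ℝ × ℝ) × (ℝ × ℝ)) := {p | p.2.1 ≤ p.1.2 ∧ p.1.2 ≤ p.2.2}
  have hD : MeasurableSet D :=
    (measurableSet_le (measurable_fst.comp measurable_snd)
      (measurable_snd.comp measurable_fst)).inter
      (measurableSet_le (measurable_snd.comp measurable_fst)
        (measurable_snd.comp measurable_snd))
  have hsection : ∀ ω, μ.real ((fun ω => (W ω, C ω)) ⁻¹' {y | ((Z ω, T ω), y) ∈ D}) = g (T ω) :=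
    fun ω => (hg (T ω)).symm
  calc _ = ∫ ω, ψ (Z ω, T ω) * D.indicator 1 ((Z ω, T ω), (W ω, C ω)) ∂μ :=
        integral_congr_ae (indicator_ipw_integrand_ae_eq hT hS hSG f (y ∘ Z))
    _ = ∫ ω, β * (f (T ω) * y (Z ω)) ∂μ := by
        rw [hindep.integral_mul_indicator_eq (hZ.prodMk hT) (hW.prodMk hC) hψ hD
          (by simpa only [hsection, hψg] using hint.const_mul β)]
        simp only [hsection, hψg]
    _ = β * ∫ ω, f (T ω) * y (Z ω) ∂μ := integral_const_mul _ _

end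

theorem percentile_estimating_function_unbiased_general
    {Ω : Type*} [MeasurableSpace Ω] (μ : Measure Ω) [IsProbabilityMeasure μ]
    (T C W Z : Ω → ℝ) (hT : Measurable T) (hC : Measurable C) (hW : Measurable W)
    (hZmeas : Measurable Z)
    (hindep : IndepFun (fun ω => (Z ω, T ω)) (fun ω => (W ω, C ω)) μ)
    (S g G : ℝ → ℝ)
    (hS : ∀ t, S t = (μ {ω | t ≤ T ω}).toReal)
    (hg : ∀ t, g t = (μ {ω | W ω ≤ t ∧ t ≤ C ω}).toReal)
    (hG : ∀ t, G t = ((μ[|{ω | W ω ≤ T ω}]) {ω | t ≤ min (T ω) (C ω) ∧ W ω ≤ t}).toReal)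
    (t1 t2 : ℝ) (hgpos : ∀ s ∈ Set.Ico t1 t2, 0 < g s)
    (q : ℝ) (m0 : ℝ)
    (hquant : ((μ[|{ω | t1 ≤ T ω ∧ T ω < t2}]) {ω | Z ω ≤ m0}).toReal = q) :
    ∫ ω, (S (min (T ω) (C ω)) / G (min (T ω) (C ω)))
        * Set.indicator {ω' | T ω' ≤ C ω'} (fun _ => (1 : ℝ)) ω
        * Set.indicator {ω' | t1 ≤ min (T ω') (C ω') ∧ min (T ω') (C ω') < t2}
            (fun _ => (1 : ℝ)) ω
        * (Set.indicator {ω' | Z ω' ≤ m0} (fun _ => (1 : ℝ)) ω - q)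
        ∂(μ[|{ω | W ω ≤ T ω}]) = 0 := by
  simp only [← measureReal_def] at hS hg hG hquant
  have hfg : ∀ t, (Set.Ico t1 t2).indicator (fun _ => (1 : ℝ)) t ≠ 0 → g t ≠ 0 := fun t ht =>
    (hgpos t (Set.mem_of_indicator_ne_zero ht)).ne'
  have hint : Integrable (fun ω => (Set.Ico t1 t2).indicator (fun _ => (1 : ℝ)) (T ω)
      * ((Set.Iic m0).indicator (fun _ => 1) (Z ω) - q)) μ := by
    refine Integrable.bdd_mul (c := 1)
      (((integrable_const 1).indicator (hZmeas measurableSet_Iic)).sub (integrable_const q))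
      ((measurable_const.indicator measurableSet_Ico).comp hT).aestronglyMeasurable
      (.of_forall fun ω => ?_)
    by_cases hω : T ω ∈ Set.Ico t1 t2 <;> simp [hω]
  rw [ProbabilityTheory.cond, integral_smul_measure, ← integral_indicator (measurableSet_le hW hT)]
  -- `erw`: the goal's indicators of `{t1 ≤ X < t2}` and `{Z ≤ m0}` are those of `Set.Ico t1 t2`
  -- and `Set.Iic m0` composed with `X` and `Z` only after unfolding set membership.
  erw [integral_indicator_ipw_eq hT hC hW hZmeas hindep hS hg hG
    (measurable_const.indicator measurableSet_Ico)
    ((measurable_const.indicator measurableSet_Iic).sub measurable_const) hfg hint, ← hquant,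
    integral_indicator_mul_sub_cond_eq_zero μ (hT measurableSet_Ico) (hZmeas measurableSet_Iic),
    mul_zero, smul_zero]

/-- Under independence of `(Z, T)` from `(W, C)`, `β = P(T ≥ W) > 0`,
positivity of `g` on `[t1, t2)`, `P(t1 ≤ T < t2) > 0` and `0 < q < 1`: if `m0` is a
`q`-th conditional quantile of the marker, i.e. `P(Z ≤ m0 | t1 ≤ T < t2) = q`, then the
population percentile estimating function vanishes at `m0`:
`E[(S(X)/G(X)) Δ 1{t1 ≤ X < t2} (1{Z ≤ m0} − q) | T ≥ W] = 0`. -/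
theorem percentile_estimating_function_unbiased
    {Ω : Type*} [MeasurableSpace Ω] (μ : Measure Ω) [IsProbabilityMeasure μ]
    (T C W Z : Ω → ℝ) (hT : Measurable T) (hC : Measurable C) (hW : Measurable W)
    (hZmeas : Measurable Z)
    (hindep : IndepFun (fun ω => (Z ω, T ω)) (fun ω => (W ω, C ω)) μ)
    (S g G : ℝ → ℝ)
    (hS : ∀ t, S t = (μ {ω | t ≤ T ω}).toReal)
    (hg : ∀ t, g t = (μ {ω | W ω ≤ t ∧ t ≤ C ω}).toReal)
    (hβ : 0 < (μ {ω | W ω ≤ T ω}).toReal)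
    (hG : ∀ t, G t = ((μ[|{ω | W ω ≤ T ω}]) {ω | t ≤ min (T ω) (C ω) ∧ W ω ≤ t}).toReal)
    (t1 t2 : ℝ) (h12 : t1 < t2) (hgpos : ∀ s ∈ Set.Ico t1 t2, 0 < g s)
    (hTpos : 0 < (μ {ω | t1 ≤ T ω ∧ T ω < t2}).toReal)
    (q : ℝ) (hq0 : 0 < q) (hq1 : q < 1) (m0 : ℝ)
    (hquant : ((μ[|{ω | t1 ≤ T ω ∧ T ω < t2}]) {ω | Z ω ≤ m0}).toReal = q) :
    ∫ ω, (S (min (T ω) (C ω)) / G (min (T ω) (C ω)))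
        * Set.indicator {ω' | T ω' ≤ C ω'} (fun _ => (1 : ℝ)) ω
        * Set.indicator {ω' | t1 ≤ min (T ω') (C ω') ∧ min (T ω') (C ω') < t2}
            (fun _ => (1 : ℝ)) ω
        * (Set.indicator {ω' | Z ω' ≤ m0} (fun _ => (1 : ℝ)) ω - q)
        ∂(μ[|{ω | W ω ≤ T ω}]) = 0 :=
  percentile_estimating_function_unbiased_general μ T C W Z hT hC hW hZmeas hindep S g G hS hg hG t1
    t2 hgpos q m0 hquant
end
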